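/- Let L be a supersolvable line arrangement with a modular point p of multiplicity 2 and a crossing point q of multiplicity n > 2. Then every crossing point of L is modular, and L is a near pencil: it has n+1 lines, exactly n of which pass through q. -/

import Mathlib

open Projectivization

/-- The projective plane over `K`, with points (and, dually, lines) given by
projectivizing `K^3`. -/
abbrev PP (K : Type*) [Field K] := Projectivization K (Fin 3 → K)

/-- Incidence: the point `p` lies on the line `l` (given by dual coordinates):
the dot product of (any) homogeneous coordinates vanishes. -/
def incid {K : Type*} [Field K] (p l : PP K) : Prop :=
  dotProduct p.rep l.rep = 0

/-- The multiplicity of a point `p` with respect to a line arrangement `L`: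
the number of lines of `L` passing through `p`. -/
noncomputable def mult {K : Type*} [Field K] (L : Set (PP K)) (p : PP K) : ℕ :=
  {l ∈ L | incid p l}.ncard

/-- `p` is a crossing point of the arrangement `L`. -/
def crossing {K : Type*} [Field K] (L : Set (PP K)) (p : PP K) : Prop :=
  2 ≤ mult L p

/-- `p` is a modular point of `L`: a crossing point such that for every other
crossing point `q`, some line of `L` passes through both `p` and `q`. -/
def modular {K : Type*} [Field K] (L : Set (PP K)) (p : PP K) : Prop :=
  crossing L p ∧ ∀ q, crossing L q → q ≠ p → ∃ l ∈ L, incid p l ∧ incid q l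

/-- `t_k`: the number of crossing points of `L` of multiplicity exactly `k`. -/
noncomputable def tk {K : Type*} [Field K] (L : Set (PP K)) (k : ℕ) : ℕ :=
  {p | mult L p = k}.ncard

/-- A pencil: all lines pass through one common point. -/
def isPencil {K : Type*} [Field K] (L : Set (PP K)) : Prop :=
  ∃ p, ∀ l ∈ L, incid p l

/-- A near pencil: an arrangement of `s ≥ 3` lines, exactly `s - 1` of which
are concurrent. -/
def isNearPencil {K : Type*} [Field K] (L : Set (PP K)) : Prop :=
  3 ≤ L.ncard ∧ ∃ p, {l ∈ L | incid p l}.ncard + 1 = L.ncard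

/-!
Let `e` be the line of `L` through `p` and `q` (modularity of `p`) and `f` the other line through
`p`. If a line `m` of `L` missed both `p` and `q`, the lines through `q` would meet `m` in distinct
crossing points, each of which lies on `e` or `f` by modularity of `p`; so `q` would lie on at most
two lines. Hence every line of `L` except `f` passes through `q`, and an arrangement in which all
lines but one are concurrent is a near pencil all of whose crossing points are modular.
-/

namespace Projectivization

open scoped LinearAlgebra.Projectivization

variable {K : Type*} [Field K] [DecidableEq K]

theorem eq_cross_of_orthogonal {u v w : ℙ K (Fin 3 → K)} (h : v ≠ w)
    (hv : u.orthogonal v) (hw : u.orthogonal w) : u = cross v w := by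
  induction u with | h u hu =>
  induction v with | h v hv₀ =>
  induction w with | h w hw₀ =>
  rw [orthogonal_mk] at hv hw
  rw [cross_mk_of_ne hv₀ hw₀ h, mk_eq_mk_iff_crossProduct_eq_zero,
    cross_cross_eq_smul_sub_smul', hw, dotProduct_comm, hv, zero_smul, zero_smul, sub_zero]

end Projectivization

section Incidence

variable {K : Type*} [Field K]

theorem incid_iff_orthogonal {x l : PP K} : incid x l ↔ x.orthogonal l := by
  conv_rhs => rw [← x.mk_rep, ← l.mk_rep]
  rfl

section Cross

variable [DecidableEq K] {x l m : PP K}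

theorem incid_cross_left (h : l ≠ m) : incid (cross l m) l :=
  incid_iff_orthogonal.2 (cross_orthogonal_left h)

theorem incid_cross_right (h : l ≠ m) : incid (cross l m) m :=
  incid_iff_orthogonal.2 (cross_orthogonal_right h)

theorem eq_cross_of_incid (h : l ≠ m) (hl : incid x l) (hm : incid x m) : x = cross l m :=
  eq_cross_of_orthogonal h (incid_iff_orthogonal.1 hl) (incid_iff_orthogonal.1 hm)

end Cross

theorem eq_of_incid_of_incid {x y l m : PP K} (h : l ≠ m) (hxl : incid x l) (hxm : incid x m)
    (hyl : incid y l) (hym : incid y m) : x = y := by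
  classical
  exact (eq_cross_of_incid h hxl hxm).trans (eq_cross_of_incid h hyl hym).symm

end Incidence

section Arrangement

variable {K : Type*} [Field K] {L : Set (PP K)} {p q r f : PP K}

theorem crossing_of_incid_of_incid (hfin : L.Finite) {x l m : PP K} (hl : l ∈ L) (hm : m ∈ L)
    (hlm : l ≠ m) (hxl : incid x l) (hxm : incid x m) : crossing L x := by
  have hsub : ({l, m} : Set (PP K)) ⊆ {g ∈ L | incid x g} := by
    rintro g (rfl | rfl)
    exacts [⟨hl, hxl⟩, ⟨hm, hxm⟩]
  calc 2 = ({l, m} : Set (PP K)).ncard := (Set.ncard_pair hlm).symm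
    _ ≤ mult L x := Set.ncard_le_ncard hsub (hfin.sep _)

/-- Sending each line through `q` to its intersection with `m` is injective, and modularity of `p`
forces every such intersection point onto a line through `p`. -/
theorem mult_le_mult_of_modular (hfin : L.Finite) {m : PP K} (hp : modular L p) (hm : m ∈ L)
    (hpm : ¬ incid p m) (hqm : ¬ incid q m) : mult L q ≤ mult L p := by
  classical
  have hne : ∀ {t}, incid q t → t ≠ m := fun hqt h => hqm (h ▸ hqt)
  refine (Set.ncard_le_ncard_of_injOn (cross · m) ?_ ?_ ((hfin.sep _).image (cross · m))).trans
    (Set.ncard_image_le (hfin.sep _))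
  · rintro t ⟨htL, hqt⟩
    have hxm := incid_cross_right (hne hqt)
    have hx : crossing L (cross t m) :=
      crossing_of_incid_of_incid hfin htL hm (hne hqt) (incid_cross_left (hne hqt)) hxm
    obtain ⟨g, hgL, hpg, hxg⟩ := hp.2 _ hx fun h => hpm (h ▸ hxm)
    have hgm : g ≠ m := fun h => hpm (h ▸ hpg)
    exact ⟨g, ⟨hgL, hpg⟩, (eq_cross_of_incid hgm hxg hxm).symm⟩
  · rintro t ⟨-, hqt⟩ t' ⟨-, hqt'⟩ h
    by_contra htt'
    replace h : cross t m = cross t' m := h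
    have hxt' : incid (cross t m) t' := h ▸ incid_cross_left (hne hqt')
    have hqx : q = cross t m :=
      eq_of_incid_of_incid htt' hqt hqt' (incid_cross_left (hne hqt)) hxt'
    exact hqm (hqx ▸ incid_cross_right (hne hqt))

section AllButOneConcurrent

variable (hL : ∀ l ∈ L, l ≠ f → incid q l)
include hL

theorem incid_of_crossing_of_ne (hfin : L.Finite) (hr : crossing L r) (hrq : r ≠ q) :
    incid r f := by
  by_contra hrf
  obtain ⟨u, ⟨huL, hru⟩, v, ⟨hvL, hrv⟩, huv⟩ := (Set.one_lt_ncard (hfin.sep _)).1 hr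
  have hne : ∀ {g}, incid r g → g ≠ f := fun hrg h => hrf (h ▸ hrg)
  exact hrq (eq_of_incid_of_incid huv hru hrv (hL u huL (hne hru)) (hL v hvL (hne hrv)))

theorem modular_of_forall_incid (hfin : L.Finite) (hf : f ∈ L) (hr : crossing L r) :
    modular L r := by
  refine ⟨hr, fun s hs hsr => ?_⟩
  obtain rfl | hrq := eq_or_ne r q
  · obtain ⟨g, ⟨hgL, hsg⟩, hgf⟩ := Set.exists_ne_of_one_lt_ncard hs f
    exact ⟨g, hgL, hL g hgL hgf, hsg⟩
  obtain rfl | hsq := eq_or_ne s q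
  · obtain ⟨g, ⟨hgL, hrg⟩, hgf⟩ := Set.exists_ne_of_one_lt_ncard hr f
    exact ⟨g, hgL, hrg, hL g hgL hgf⟩
  exact ⟨f, hf, incid_of_crossing_of_ne hL hfin hr hrq, incid_of_crossing_of_ne hL hfin hs hsq⟩

theorem ncard_eq_mult_add_one (hfin : L.Finite) (hf : f ∈ L) (hqf : ¬ incid q f) :
    L.ncard = mult L q + 1 := by
  have hQ : {l ∈ L | incid q l} = L \ {f} := by
    ext l
    exact ⟨fun ⟨hl, hql⟩ => ⟨hl, fun h => hqf (h ▸ hql)⟩, fun ⟨hl, hlf⟩ => ⟨hl, hL l hl hlf⟩⟩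
  rw [mult, hQ, Set.ncard_sdiff_singleton_add_one hf hfin]

end AllButOneConcurrent

end Arrangement

/-- if p is a modular point of multiplicity 2 and q is a crossing
point of multiplicity n > 2, then every crossing point of L is modular and L is
a near pencil with n + 1 lines, exactly n of which pass through q. -/
theorem near_pencil_from_modular_double_point {K : Type*} [Field K] (L : Set (PP K))
    (hfin : L.Finite) (p q : PP K) (n : ℕ)
    (hp : modular L p) (hpm : mult L p = 2)
    (hq : crossing L q) (hqn : mult L q = n) (hn : 2 < n) :
    (∀ r, crossing L r → modular L r) ∧ isNearPencil L ∧
      L.ncard = n + 1 ∧ {l ∈ L | incid q l}.ncard = n := by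
  have hqp : q ≠ p := by rintro rfl; omega
  obtain ⟨e, heL, hpe, hqe⟩ := hp.2 q hq hqp
  obtain ⟨f, hf⟩ : ∃ f, {l ∈ L | incid p l} \ {e} = {f} := by
    have heP : e ∈ {l ∈ L | incid p l} := ⟨heL, hpe⟩
    rw [← Set.ncard_eq_one, Set.ncard_sdiff_singleton_of_mem heP]
    show mult L p - 1 = 1
    omega
  have hfmem : f ∈ {l ∈ L | incid p l} \ {e} := hf ▸ Set.mem_singleton f
  obtain ⟨⟨hfL, hpf⟩, hfe⟩ : (f ∈ L ∧ incid p f) ∧ f ≠ e := hfmem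
  have hqf : ¬ incid q f := fun hqf => hqp (eq_of_incid_of_incid hfe hqf hqe hpf hpe)
  have hL : ∀ l ∈ L, l ≠ f → incid q l := by
    intro l hl hlf
    by_contra hql
    by_cases hpl : incid p l
    · exact hlf (hf ▸ ⟨⟨hl, hpl⟩, fun hle => hql (hle ▸ hqe)⟩ : l ∈ ({f} : Set (PP K)))
    · have := mult_le_mult_of_modular hfin hp hl hpl hql
      omega
  have hcard : L.ncard = n + 1 := hqn ▸ ncard_eq_mult_add_one hL hfin hfL hqf
  exact ⟨fun r => modular_of_forall_incid hL hfin hfL,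
    ⟨by omega, q, by rw [← mult, hqn, hcard]⟩, hcard, hqn⟩
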